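/- arXiv:0710.5711 — 3 statements merged into one kernel-verified Lean document; each statement's English description precedes it below -/
import Mathlib

section
/- If a connected multigraph G contains a bridge (an edge whose removal disconnects G), then any graph obtained from G by splitting a vertex into two and joining the two new vertices by a single new edge also contains a bridge. -/
structure Multigraph (V : Type) (E : Type) where
  ends : E → Sym2 V

namespace Multigraph

variable {V E V' E' : Type}

/-- Two vertices are adjacent if some edge joins them. -/
def Adj (G : Multigraph V E) (u v : V) : Prop := ∃ e : E, G.ends e = s(u, v)

/-- Reachability: joined by a path (reflexive-transitive closure of adjacency). -/
def Reachable (G : Multigraph V E) : V → V → Prop := Relation.ReflTransGen G.Adj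

/-- A multigraph is connected if every pair of vertices is joined by a path. -/
def Connected (G : Multigraph V E) : Prop := ∀ u v : V, G.Reachable u v

/-- Number of connected components. -/
noncomputable def numComponents (G : Multigraph V E) : ℕ := Nat.card (Quot G.Reachable)

/-- Add a new edge with given pair of endpoints; the new edge is `none`. -/
def addEdge (G : Multigraph V E) (p : Sym2 V) : Multigraph V (Option E) :=
  ⟨fun e => e.elim p G.ends⟩

/-- Delete the edge `e`. -/
def deleteEdge (G : Multigraph V E) (e : E) : Multigraph V {f : E // f ≠ e} :=
  ⟨fun f => G.ends f.1⟩

/-- An edge of a connected multigraph is a bridge if its removal disconnects the graph. -/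
def IsBridge (G : Multigraph V E) (e : E) : Prop := ¬ (G.deleteEdge e).Connected

/-- Edge-biconnected: connected and with no bridge. -/
def Biconnected (G : Multigraph V E) : Prop := G.Connected ∧ ∀ e : E, ¬ G.IsBridge e

/-- A multigraph is simple if it has no loops and no multiple edges. -/
def Simple (G : Multigraph V E) : Prop :=
  (∀ e : E, ¬ (G.ends e).IsDiag) ∧ ∀ e f : E, G.ends e = G.ends f → e = f

/-- `f`, `g` describe a cycle: a closed walk with distinct vertices and distinct edges.
A loop gives a cycle of length one, a pair of parallel edges a cycle of length two. -/
def IsCycleOn (G : Multigraph V E) (n : ℕ) (f : ZMod n → V) (g : ZMod n → E) : Prop :=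
  0 < n ∧ Function.Injective f ∧ Function.Injective g ∧
    ∀ i : ZMod n, G.ends (g i) = s(f i, f (i + 1))

/-- `C` is the edge set of a cycle of `G`. -/
def IsCycleEdgeSet (G : Multigraph V E) (C : Set E) : Prop :=
  ∃ (n : ℕ) (f : ZMod n → V) (g : ZMod n → E), G.IsCycleOn n f g ∧ C = Set.range g

def HasCycle (G : Multigraph V E) : Prop := ∃ C : Set E, G.IsCycleEdgeSet C

/-- A tree is a connected multigraph with no cycles. -/
def IsTree (G : Multigraph V E) : Prop := G.Connected ∧ ¬ G.HasCycle

/-- The cycle space: the span over `ZMod 2` of the indicator vectors of edge sets of cycles,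
inside the space of subsets of `E` with symmetric difference (i.e. `E → ZMod 2`). -/
noncomputable def cycleSpace (G : Multigraph V E) : Submodule (ZMod 2) (E → ZMod 2) :=
  Submodule.span (ZMod 2)
    { x | ∃ C : Set E, G.IsCycleEdgeSet C ∧ x = C.indicator (fun _ => (1 : ZMod 2)) }

/-- When splitting the vertex `v` into `some v` and `none`, an edge-end at `u : V`
may be reassigned to `w : Option V` exactly when this holds. -/
def SplitEnd (v u : V) (w : Option V) : Prop :=
  (u = v ∧ (w = some v ∨ w = none)) ∨ (u ≠ v ∧ w = some u)

/-- `H` is obtained from `G` by splitting the vertex `v` into two vertices `some v` and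
`none`, distributing the edge-ends formerly incident to `v` between the two in some way
(no new edge added yet). -/
def IsSplitAssign (G : Multigraph V E) (v : V) (H : Multigraph (Option V) E) : Prop :=
  ∀ e : E, ∃ (a b : V) (a' b' : Option V),
    G.ends e = s(a, b) ∧ H.ends e = s(a', b') ∧ SplitEnd v a a' ∧ SplitEnd v b b'

/-- `G'` is obtained from `G` by splitting the vertex `v` in two, distributing the
edge-ends incident to `v` between the two new vertices in some way, and adding one
new edge joining the two new vertices. -/
def IsSplitAt (G : Multigraph V E) (v : V) (G' : Multigraph (Option V) (Option E)) : Prop :=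
  ∃ H : Multigraph (Option V) E, G.IsSplitAssign v H ∧ G' = H.addEdge s(some v, none)

/-- Contract the non-loop edge `e` with endpoints `u ≠ v`: delete `e` and identify
`v` with `u`, keeping all other edges. -/
def contract [DecidableEq V] (G : Multigraph V E) (e : E) (u v : V) (huv : u ≠ v) :
    Multigraph {x : V // x ≠ v} {f : E // f ≠ e} :=
  ⟨fun f => (G.ends f.1).map (fun x => if h : x = v then ⟨u, huv⟩ else ⟨x, h⟩)⟩

/-- Isomorphism of multigraphs: bijections of vertices and of edges compatible with
the incidence maps. -/
def IsIsomorphic (G : Multigraph V E) (H : Multigraph V' E') : Prop :=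
  ∃ (σ : V ≃ V') (τ : E ≃ E'), ∀ e : E, H.ends (τ e) = (G.ends e).map σ

end Multigraph

/-- If a connected multigraph contains a bridge, then any graph obtained from it by
splitting a vertex in two and joining the two new vertices by a single new edge also
contains a bridge. -/
theorem split_has_bridge (V E : Type) [Fintype V] [Fintype E] (G : Multigraph V E)
    (hG : G.Connected) (hb : ∃ e : E, G.IsBridge e) (v : V)
    (G' : Multigraph (Option V) (Option E)) (hsplit : G.IsSplitAt v G') :
    ∃ e' : Option E, G'.IsBridge e' := by
  classical
  obtain ⟨e, he⟩ := hb
  obtain ⟨H, hH, rfl⟩ := hsplit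
  refine ⟨some e, fun hcon => he ?_⟩
  set π : Option V → V := fun x => x.elim v id with hπ
  have hSE : ∀ (a : V) (a' : Option V), Multigraph.SplitEnd v a a' → π a' = a := by
    rintro a a' (⟨rfl, (rfl | rfl)⟩ | ⟨ha, rfl⟩) <;> rfl
  have key : ∀ u w : Option V,
      ((H.addEdge s(some v, none)).deleteEdge (some e)).Adj u w →
      (G.deleteEdge e).Reachable (π u) (π w) := by
    rintro u w ⟨⟨f, hf⟩, hends⟩
    match f with
    | none =>
      have h1 : s(some v, (none : Option V)) = s(u, w) := hends
      rw [Sym2.eq_iff] at h1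
      have : π u = v ∧ π w = v := by
        rcases h1 with ⟨rfl, rfl⟩ | ⟨rfl, rfl⟩ <;> exact ⟨rfl, rfl⟩
      rw [this.1, this.2]
      exact Relation.ReflTransGen.refl
    | some g =>
      have hge : g ≠ e := fun h => hf (by rw [h])
      obtain ⟨a, b, a', b', hab, hab', ha, hb⟩ := hH g
      have h1 : H.ends g = s(u, w) := hends
      rw [hab'] at h1
      rw [Sym2.eq_iff] at h1
      have hG' : G.ends g = s(π u, π w) := by
        rw [hab, ← hSE a a' ha, ← hSE b b' hb]
        rcases h1 with ⟨rfl, rfl⟩ | ⟨rfl, rfl⟩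
        · rfl
        · exact Sym2.eq_swap
      exact Relation.ReflTransGen.single ⟨⟨g, hge⟩, hG'⟩
  intro a b
  have hr : ((H.addEdge s(some v, none)).deleteEdge (some e)).Reachable (some a) (some b) :=
    hcon (some a) (some b)
  have lift : ∀ {x y : Option V},
      ((H.addEdge s(some v, none)).deleteEdge (some e)).Reachable x y →
      (G.deleteEdge e).Reachable (π x) (π y) := by
    intro x y h
    induction h with
    | refl => exact Relation.ReflTransGen.refl
    | tail _ hadj ih => exact ih.trans (key _ _ hadj)
  exact lift hr
end

section
/- Let G be an edge-biconnected (bridgeless connected) multigraph, and let G' be obtained by splitting a vertex v into v, v' (distributing incident edge-ends arbitrarily) such that the result before adding the new edge is still connected, and then adding one new edge between v and v'. Then G' is edge-biconnected. -/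
/-! Once the two halves `some v` and `none` of `v` are rejoined by the new edge, every edge
`f ≠ e` of `G` with ends `a, b` still links `some a` to `some b`, so paths of `G - e` lift to
`G' - e`. The new edge itself is no bridge because the split graph is connected without it. -/

namespace Multigraph

variable {V E E' : Type}

theorem Adj.symm {G : Multigraph V E} {u w : V} (h : G.Adj u w) : G.Adj w u :=
  let ⟨f, hf⟩ := h
  ⟨f, hf.trans Sym2.eq_swap⟩

instance (G : Multigraph V E) : Std.Symm G.Adj := ⟨fun _ _ => Adj.symm⟩

theorem Reachable.symm {G : Multigraph V E} {u w : V} (h : G.Reachable u w) : G.Reachable w u :=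
  Std.Symm.symm (r := Relation.ReflTransGen G.Adj) _ _ h

theorem Connected.mono {G : Multigraph V E} {H : Multigraph V E'}
    (hGH : ∀ u w, G.Adj u w → H.Adj u w) (hG : G.Connected) : H.Connected :=
  fun u w => Relation.ReflTransGen.mono hGH _ _ (hG u w)

theorem Adj.addEdge {G : Multigraph V E} {u w : V} (p : Sym2 V) (h : G.Adj u w) :
    (G.addEdge p).Adj u w :=
  let ⟨f, hf⟩ := h
  ⟨some f, hf⟩

theorem Adj.deleteEdge_addEdge_none {G : Multigraph V E} {u w : V} (p : Sym2 V)
    (h : G.Adj u w) : ((G.addEdge p).deleteEdge none).Adj u w :=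
  let ⟨f, hf⟩ := h
  ⟨⟨some f, Option.some_ne_none f⟩, hf⟩

theorem connected_of_reachable_some {K : Multigraph (Option V) E} {v : V}
    (hK : K.Adj (some v) none) (hsome : ∀ u w : V, K.Reachable (some u) (some w)) :
    K.Connected := by
  have hgetD : ∀ x : Option V, K.Reachable (some (x.getD v)) x
    | some _ => .refl
    | none => .single hK
  intro x y
  exact (hgetD x).symm.trans ((hsome _ _).trans (hgetD y))

theorem SplitEnd.reachable {K : Multigraph (Option V) E} {v a : V} {a' : Option V}
    (hK : K.Adj (some v) none) (h : SplitEnd v a a') : K.Reachable (some a) a' := by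
  rcases h with ⟨rfl, rfl | rfl⟩ | ⟨-, rfl⟩
  · exact .refl
  · exact .single hK
  · exact .refl

theorem IsSplitAssign.reachable_of_ends {G : Multigraph V E} {v : V}
    {H : Multigraph (Option V) E} {K : Multigraph (Option V) E'} (hH : G.IsSplitAssign v H)
    (hK : K.Adj (some v) none) {f : E} (hf : ∃ f', K.ends f' = H.ends f) {a b : V}
    (hab : G.ends f = s(a, b)) : K.Reachable (some a) (some b) := by
  obtain ⟨c, d, c', d', hcd, hcd', hc, hd⟩ := hH f
  obtain ⟨f', hf'⟩ := hf
  have hpath : K.Reachable (some c) (some d) :=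
    ((hc.reachable hK).tail ⟨f', hf'.trans hcd'⟩).trans (hd.reachable hK).symm
  rcases Sym2.eq_iff.mp (hcd.symm.trans hab) with ⟨rfl, rfl⟩ | ⟨rfl, rfl⟩
  · exact hpath
  · exact hpath.symm

theorem IsSplitAssign.connected_deleteEdge_addEdge {G : Multigraph V E} {v : V}
    {H : Multigraph (Option V) E} (hH : G.IsSplitAssign v H) {e : E}
    (hGe : (G.deleteEdge e).Connected) :
    ((H.addEdge s(some v, none)).deleteEdge (some e)).Connected := by
  have hnew : ((H.addEdge s(some v, none)).deleteEdge (some e)).Adj (some v) none :=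
    ⟨⟨none, Option.some_ne_none e ∘ Eq.symm⟩, rfl⟩
  refine connected_of_reachable_some hnew fun u w =>
    Relation.ReflTransGen.lift' some ?_ _ _ (hGe u w)
  rintro a b ⟨f, hf⟩
  refine hH.reachable_of_ends hnew ⟨⟨some f.1, ?_⟩, rfl⟩ hf
  exact fun h => f.2 (Option.some_injective E h)

end Multigraph

theorem split_biconnected_general (V E : Type) (G : Multigraph V E)
    (hG : G.Biconnected) (v : V) (H : Multigraph (Option V) E)
    (hH : G.IsSplitAssign v H) (hconn : H.Connected) :
    (H.addEdge s(some v, none)).Biconnected := by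
  refine ⟨hconn.mono fun _ _ => Multigraph.Adj.addEdge _, ?_⟩
  rintro (_ | e) hbridge <;> apply hbridge
  · exact hconn.mono fun _ _ => Multigraph.Adj.deleteEdge_addEdge_none _
  · exact hH.connected_deleteEdge_addEdge (not_not.mp (hG.2 e))

/-- Splitting a vertex of an edge-biconnected multigraph such that the result before
adding the new edge is still connected, then adding one new edge between the two new
vertices, yields an edge-biconnected multigraph. -/
theorem split_biconnected (V E : Type) [Fintype V] [Fintype E] (G : Multigraph V E)
    (hG : G.Biconnected) (v : V) (H : Multigraph (Option V) E)
    (hH : G.IsSplitAssign v H) (hconn : H.Connected) :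
    (H.addEdge s(some v, none)).Biconnected :=
  split_biconnected_general V E G hG v H hH hconn
end

section
/- A connected multigraph on n ≥ 2 vertices in which some vertex v is joined to another vertex w by exactly one edge, and where removing that edge separates v from w, remains non-edge-biconnected after splitting v into two vertices and joining them by one new edge: in every resulting graph, w is joined by exactly one edge to exactly one of the two new vertices and shares no cycle with it. -/
/-!
Merging the two halves of `v` back together (the map `Option.getD · v`) sends every old edge
of the split graph to its original edge of `G` and collapses the new edge to the vertex `v`.
Hence a path in the split graph avoiding `e` projects to a walk in `G` avoiding `e`, so if
`e` disconnected `G` it still disconnects the split graph.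
-/

namespace Multigraph

variable {V E V' E' : Type}

theorem Connected.of_reachable_map {G : Multigraph V E} {G' : Multigraph V' E'} (φ : V' → V)
    (hφ : Function.Surjective φ) (hadj : ∀ a b, G'.Adj a b → G.Reachable (φ a) (φ b))
    (hG' : G'.Connected) : G.Connected := by
  intro u u'
  obtain ⟨a, rfl⟩ := hφ u
  obtain ⟨b, rfl⟩ := hφ u'
  exact Relation.ReflTransGen.lift' φ hadj a b (hG' a b)

theorem SplitEnd.getD_eq {v u : V} {u' : Option V} (h : SplitEnd v u u') : u'.getD v = u := by
  rcases h with ⟨rfl, rfl | rfl⟩ | ⟨-, rfl⟩ <;> rfl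

section Split

variable {G : Multigraph V E} {v : V} {H : Multigraph (Option V) E}

theorem IsSplitAssign.map_ends (hH : G.IsSplitAssign v H) (f : E) :
    (H.ends f).map (·.getD v) = G.ends f := by
  obtain ⟨a, b, a', b', hGf, hHf, ha, hb⟩ := hH f
  rw [hGf, hHf, Sym2.map_mk, ha.getD_eq, hb.getD_eq]

theorem IsSplitAssign.ends_eq_of_ends_eq (hH : G.IsSplitAssign v H) {w : V} (hvw : v ≠ w)
    {e : E} (he : G.ends e = s(v, w)) :
    ∃ x : Option V, (x = some v ∨ x = none) ∧ H.ends e = s(some w, x) := by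
  have hmap := hH.map_ends e
  generalize H.ends e = z at hmap ⊢
  induction z using Sym2.ind with
  | _ a b =>
    rw [he, Sym2.map_mk, Sym2.eq_iff] at hmap
    simp only [Option.getD_eq_iff, hvw, and_false, or_false] at hmap
    rcases hmap with ⟨ha, rfl⟩ | ⟨rfl, hb⟩
    · exact ⟨a, ha.imp_right And.left, Sym2.eq_swap⟩
    · exact ⟨b, hb.imp_right And.left, rfl⟩

theorem IsSplitAssign.reachable_of_adj_deleteEdge (hH : G.IsSplitAssign v H) (e : E)
    {a b : Option V} (hab : ((H.addEdge s(some v, none)).deleteEdge (some e)).Adj a b) :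
    (G.deleteEdge e).Reachable (a.getD v) (b.getD v) := by
  obtain ⟨⟨f, hfe⟩, hf⟩ := hab
  cases f with
  | none =>
    -- the new edge joins the two halves of `v`, which merge to the same vertex
    have hf : s(some v, none) = s(a, b) := hf
    rcases Sym2.eq_iff.1 hf with ⟨rfl, rfl⟩ | ⟨rfl, rfl⟩ <;>
      exact Relation.ReflTransGen.refl
  | some f =>
    refine Relation.ReflTransGen.single ⟨⟨f, fun h => hfe (congrArg some h)⟩, ?_⟩
    change G.ends f = _
    rw [← hH.map_ends f, show H.ends f = s(a, b) from hf, Sym2.map_mk]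

end Split

theorem IsBridge.of_isSplitAt {G : Multigraph V E} {v : V}
    {G' : Multigraph (Option V) (Option E)} (hsplit : G.IsSplitAt v G') {e : E}
    (hbridge : G.IsBridge e) : G'.IsBridge (some e) := by
  obtain ⟨H, hH, rfl⟩ := hsplit
  exact fun hconn => hbridge <| hconn.of_reachable_map (·.getD v)
    (fun u => ⟨some u, rfl⟩) fun _ _ => hH.reachable_of_adj_deleteEdge e

theorem IsBridge.not_biconnected {G : Multigraph V E} {e : E} (h : G.IsBridge e) :
    ¬ G.Biconnected :=
  fun hG => hG.2 e h

end Multigraph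

theorem split_still_not_biconnected_general (V E : Type)
    (G : Multigraph V E)
    (v w : V) (hvw : v ≠ w) (e : E) (he : G.ends e = s(v, w))
    (huniq : ∀ f : E, G.ends f = s(v, w) → f = e) (hbridge : G.IsBridge e)
    (G' : Multigraph (Option V) (Option E)) (hsplit : G.IsSplitAt v G') :
    ∃ x : Option V, (x = some v ∨ x = none) ∧ G'.ends (some e) = s(some w, x) ∧
      (∀ f : Option E, G'.ends f = s(some w, x) → f = some e) ∧
      G'.IsBridge (some e) ∧ ¬ G'.Biconnected := by
  have hbridge' := hbridge.of_isSplitAt hsplit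
  obtain ⟨H, hH, rfl⟩ := hsplit
  obtain ⟨x, hx, hex⟩ := hH.ends_eq_of_ends_eq hvw he
  refine ⟨x, hx, hex, ?_, hbridge', hbridge'.not_biconnected⟩
  rintro (_ | f) hf
  · -- the new edge joins `some v` to `none`, neither of which is `some w`
    have hf : s(some v, none) = s(some w, x) := hf
    simp [hvw] at hf
  · have hx' : x.getD v = v := by rcases hx with rfl | rfl <;> rfl
    have hGf : G.ends f = s(v, w) := by
      rw [← hH.map_ends f, show H.ends f = s(some w, x) from hf, Sym2.map_mk, hx',
        Option.getD_some, Sym2.eq_swap]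
    rw [huniq f hGf]

/-- Let `G` be connected on at least two vertices, with distinct vertices `v` and `w`
joined by exactly one edge `e`, which is a bridge. Then in every graph obtained by
splitting `v` in two and joining the two new vertices by one new edge, `w` is joined
by exactly one edge to exactly one of the two new vertices, that edge (`e`) is still a
bridge (so `w` shares no cycle with that vertex), and the resulting graph is not
edge-biconnected. -/
theorem split_still_not_biconnected (V E : Type) [Fintype V] [Fintype E]
    (G : Multigraph V E) (hG : G.Connected) (hcard : 2 ≤ Fintype.card V)
    (v w : V) (hvw : v ≠ w) (e : E) (he : G.ends e = s(v, w))
    (huniq : ∀ f : E, G.ends f = s(v, w) → f = e) (hbridge : G.IsBridge e)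
    (G' : Multigraph (Option V) (Option E)) (hsplit : G.IsSplitAt v G') :
    ∃ x : Option V, (x = some v ∨ x = none) ∧ G'.ends (some e) = s(some w, x) ∧
      (∀ f : Option E, G'.ends f = s(some w, x) → f = some e) ∧
      G'.IsBridge (some e) ∧ ¬ G'.Biconnected :=
  split_still_not_biconnected_general V E G v w hvw e he huniq hbridge G' hsplit
end
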